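/- arXiv:2112.10933 — 3 statements merged into one kernel-verified Lean document; each statement's English description precedes it below -/
import Mathlib

section
/- For integers n > D ≥ 1, setting B = ⌈√(n/D)⌉ (ceiling of the real square root), one has max(⌈n/B⌉ + B, B·D) ≤ 2·√(n·D) + 2. In particular the width max(⌈n/B⌉+B, BD) of the perfect decoder is O(√(Dn)). -/
/-- With `B = ⌈√(n/D)⌉`, the width `max(⌈n/B⌉ + B, B·D)` of the perfect decoder is at
most `2√(nD) + 2`; in particular it is `O(√(Dn))`. -/
theorem stmt_7 (n D : ℕ) (hD : 1 ≤ D) (h : D < n) :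
    let B : ℕ := ⌈Real.sqrt ((n : ℝ) / D)⌉₊
    ((max ((n + B - 1) / B + B) (B * D) : ℕ) : ℝ)
      ≤ 2 * Real.sqrt ((n : ℝ) * D) + 2 := by
  intro B
  have hDr : (1:ℝ) ≤ (D:ℝ) := by exact_mod_cast hD
  have hnr : (D:ℝ) < (n:ℝ) := by exact_mod_cast h
  have hnpos : (0:ℝ) < n := lt_of_le_of_lt (by linarith) hnr
  set s := Real.sqrt ((n:ℝ)/D) with hs_def
  have hspos : 0 < s := Real.sqrt_pos.2 (by positivity)
  have hs1 : 1 < s := by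
    rw [hs_def, show (1:ℝ) = Real.sqrt 1 by simp]
    apply Real.sqrt_lt_sqrt (by norm_num)
    rw [lt_div_iff₀ (by linarith)]; linarith
  have hsB : s ≤ (B:ℝ) := Nat.le_ceil s
  have hBs : (B:ℝ) < s + 1 := Nat.ceil_lt_add_one hspos.le
  have hB1 : 1 ≤ B := by
    have : (0:ℝ) < B := lt_of_lt_of_le hspos hsB
    exact_mod_cast Nat.one_le_iff_ne_zero.2 (by positivity)
  have hBpos : (0:ℝ) < (B:ℝ) := lt_of_lt_of_le hspos hsB
  have hsq : s * Real.sqrt ((n:ℝ)*D) = n := by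
    rw [hs_def, ← Real.sqrt_mul (by positivity)]
    rw [show (n:ℝ)/D * ((n:ℝ)*D) = n^2 by field_simp]
    exact Real.sqrt_sq hnpos.le
  have key1 : (n:ℝ)/s = Real.sqrt ((n:ℝ)*D) := by
    rw [div_eq_iff hspos.ne', mul_comm]; exact hsq.symm
  have hs2 : s^2 = (n:ℝ)/D := Real.sq_sqrt (by positivity)
  have key2 : s * D = Real.sqrt ((n:ℝ)*D) := by
    rw [show (n:ℝ)*D = (s*D)^2 by rw [mul_pow, hs2]; field_simp]
    exact (Real.sqrt_sq (by positivity)).symm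
  have hDle : (D:ℝ) ≤ Real.sqrt ((n:ℝ)*D) := by
    have h0 := Real.sqrt_le_sqrt (show (D:ℝ)*D ≤ n*D by nlinarith)
    rwa [Real.sqrt_mul_self (by linarith)] at h0
  have hsle : s ≤ Real.sqrt ((n:ℝ)*D) := by
    rw [hs_def]
    apply Real.sqrt_le_sqrt
    rw [div_le_iff₀ (by linarith)]
    nlinarith [mul_nonneg hnpos.le (sub_nonneg.2 hDr),
      mul_nonneg (mul_nonneg hnpos.le (by linarith : (0:ℝ) ≤ D)) (sub_nonneg.2 hDr)]
  rw [Nat.cast_max]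
  apply max_le
  · -- ⌈n/B⌉ + B ≤ 2√(nD)+2
    have h1 : (((n + B - 1) / B : ℕ) : ℝ) ≤ ((n + B - 1 : ℕ) : ℝ) / B :=
      Nat.cast_div_le
    have h2 : ((n + B - 1 : ℕ) : ℝ) = (n:ℝ) + B - 1 := by
      have : 1 ≤ n + B := by omega
      push_cast [Nat.cast_sub this]
      ring
    have h3 : ((n:ℝ) + B - 1) / B ≤ (n:ℝ)/B + 1 := by
      rw [div_le_iff₀ hBpos]
      rw [div_add_one hBpos.ne', div_mul_cancel₀ _ hBpos.ne']
      linarith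
    have h4 : (n:ℝ)/B ≤ (n:ℝ)/s := by
      apply div_le_div_of_nonneg_left hnpos.le hspos hsB
    push_cast
    rw [key1] at h4
    calc (((n + B - 1) / B : ℕ) : ℝ) + B ≤ (n:ℝ)/B + 1 + (s + 1) := by
          rw [h2] at h1; linarith
      _ ≤ 2 * Real.sqrt ((n:ℝ)*D) + 2 := by linarith
  · push_cast
    have : (B:ℝ) * D ≤ (s+1) * D := by
      apply mul_le_mul_of_nonneg_right hBs.le (by linarith)
    calc (B:ℝ) * D ≤ (s+1)*D := this
      _ = Real.sqrt ((n:ℝ)*D) + D := by rw [← key2]; ring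
      _ ≤ 2 * Real.sqrt ((n:ℝ)*D) + 2 := by linarith
end

section
/- Let n, d, D, N be positive integers with n ≤ 2^d, 3d ≤ D − 1, and suppose 2^{nd} · 2^{N + dN²} ≥ C(2^D, n). Then N + dN² > n(D−1)/3, and consequently N > √((D−1)n/(3d)) − 1; in particular N = Ω(√(Dn/d)). -/
/-- Arithmetic core of the decoder-size lower bound: if `n ≤ 2^d`, `3d ≤ D-1` and
`2^{nd}·2^{N+dN²} ≥ C(2^D, n)`, then `N + dN² > n(D-1)/3` and `N > √((D-1)n/(3d)) - 1`. -/
theorem stmt_10 (n d D N : ℕ) (hn : 0 < n) (hd : 0 < d) (hD : 0 < D) (hN : 0 < N)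
    (h1 : n ≤ 2 ^ d) (h2 : 3 * d ≤ D - 1)
    (h3 : ((Nat.choose (2 ^ D) n : ℝ)) ≤ 2 ^ (n * d) * 2 ^ (N + d * N ^ 2)) :
    ((n : ℝ) * ((D : ℝ) - 1)) / 3 < (N : ℝ) + (d : ℝ) * (N : ℝ) ^ 2 ∧
    Real.sqrt (((D : ℝ) - 1) * n / (3 * d)) - 1 < (N : ℝ) := by
  have hdD : d ≤ D - 1 := le_trans (by omega) h2
  have h2d : (2 : ℕ) ^ d ≤ 2 ^ (D - 1) := Nat.pow_le_pow_right (by norm_num) hdD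
  have hnD : n ≤ 2 ^ (D - 1) := le_trans h1 h2d
  have hDsplit : (2 : ℕ) ^ D = 2 ^ (D - 1) + 2 ^ (D - 1) := by
    obtain ⟨k, rfl⟩ : ∃ k, D = k + 1 := ⟨D - 1, by omega⟩
    simp [pow_succ, mul_two]
  -- lower bound on choose
  have hkey : ((2 : ℝ) ^ (D - 1)) ^ n < (((2 ^ D + 1 - n : ℕ) : ℝ)) ^ n := by
    have hlt : (2 : ℕ) ^ (D - 1) < 2 ^ D + 1 - n := by omega
    have hlt' : ((2 : ℝ) ^ (D - 1)) < ((2 ^ D + 1 - n : ℕ) : ℝ) := by exact_mod_cast hlt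
    exact pow_lt_pow_left₀ hlt' (by positivity) (by omega)
  have hfact : ((Nat.factorial n : ℕ) : ℝ) ≤ ((2 : ℝ) ^ d) ^ n := by
    have h1' : (Nat.factorial n : ℕ) ≤ n ^ n := Nat.factorial_le_pow n
    have h2' : n ^ n ≤ (2 ^ d) ^ n := Nat.pow_le_pow_left h1 n
    calc ((Nat.factorial n : ℕ) : ℝ) ≤ ((n ^ n : ℕ) : ℝ) := by exact_mod_cast h1'
      _ ≤ (((2 ^ d) ^ n : ℕ) : ℝ) := by exact_mod_cast h2'
      _ = ((2 : ℝ) ^ d) ^ n := by push_cast; ring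
  have hchoose := Nat.pow_le_choose (α := ℝ) n (2 ^ D)
  have hfactpos : (0 : ℝ) < (Nat.factorial n : ℕ) := by exact_mod_cast Nat.factorial_pos n
  have hlow : ((2 : ℝ) ^ (D - 1)) ^ n < ((2 : ℝ) ^ d) ^ n * ((2 ^ D).choose n : ℝ) := by
    have t0 : (((2 ^ D + 1 - n : ℕ) : ℝ)) ^ n ≤ ((2 ^ D).choose n : ℝ) * (Nat.factorial n : ℕ) :=
      (div_le_iff₀ hfactpos).mp hchoose
    have t1 : ((2 ^ D).choose n : ℝ) * ((Nat.factorial n : ℕ) : ℝ) ≤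
        ((2 ^ D).choose n : ℝ) * ((2 : ℝ) ^ d) ^ n :=
      mul_le_mul_of_nonneg_left hfact (by positivity)
    rw [mul_comm]
    exact lt_of_lt_of_le hkey (le_trans t0 t1)
  -- combine with h3
  have hcomb : ((2 : ℝ)) ^ ((D - 1) * n) < (2 : ℝ) ^ (d * n + n * d + (N + d * N ^ 2)) := by
    calc ((2 : ℝ)) ^ ((D - 1) * n) = ((2 : ℝ) ^ (D - 1)) ^ n := by rw [pow_mul]
      _ < ((2 : ℝ) ^ d) ^ n * ((2 ^ D).choose n : ℝ) := hlow
      _ ≤ ((2 : ℝ) ^ d) ^ n * (2 ^ (n * d) * 2 ^ (N + d * N ^ 2)) := by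
          apply mul_le_mul_of_nonneg_left h3 (by positivity)
      _ = (2 : ℝ) ^ (d * n + n * d + (N + d * N ^ 2)) := by
          rw [← pow_mul, ← pow_add, ← pow_add]; congr 1; ring
  have hnat : (D - 1) * n < d * n + n * d + (N + d * N ^ 2) :=
    (pow_lt_pow_iff_right₀ (by norm_num : (1 : ℝ) < 2)).mp hcomb
  have hcast : ((D : ℝ) - 1) * n < d * n + n * d + (N + d * N ^ 2) := by
    have := (Nat.cast_lt (α := ℝ)).mpr hnat
    push_cast [Nat.cast_sub hD] at this
    convert this using 2 <;> push_cast <;> ring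
  have h2r : 3 * (d : ℝ) ≤ (D : ℝ) - 1 := by
    have := (Nat.cast_le (α := ℝ)).mpr h2
    push_cast [Nat.cast_sub hD] at this
    linarith
  have hnr : (1 : ℝ) ≤ n := by exact_mod_cast hn
  have hdr : (1 : ℝ) ≤ d := by exact_mod_cast hd
  have hNr : (1 : ℝ) ≤ N := by exact_mod_cast hN
  have first : ((n : ℝ) * ((D : ℝ) - 1)) / 3 < (N : ℝ) + (d : ℝ) * (N : ℝ) ^ 2 := by
    nlinarith
  refine ⟨first, ?_⟩
  have hNpos : (0 : ℝ) < (N : ℝ) + 1 := by linarith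
  have : Real.sqrt (((D : ℝ) - 1) * n / (3 * d)) < (N : ℝ) + 1 := by
    rw [show (N : ℝ) + 1 = Real.sqrt (((N : ℝ) + 1) ^ 2) from
      (Real.sqrt_sq (by linarith)).symm]
    apply Real.sqrt_lt_sqrt (div_nonneg (mul_nonneg (by nlinarith) (by positivity)) (by positivity))
    rw [div_lt_iff₀ (by positivity)]
    nlinarith
  linarith
end

section
/- Let B ≥ 2 and k ∈ {0,1}^B, and for r ∈ {0,…,B−1} define z_r(k) as follows: z₀(k) = [for all h ∈ {0,…,B−2}: k₀ = 1 or k_{h+1} = 1], and for r ≥ 1, z_r(k) = k_r. Equivalently, with y_h defined via thresholds on w_h(k) minus 2^{B−2}·[r=0] minus 2^{B−1}·[r=h+1], and z = [Σ_{h=0}^{B−2} y_h ≥ B−1]: the resulting vector (z₀(k), …, z_{B−1}(k)) equals (1,1,…,1) if k = (0,1,1,…,1), and equals k otherwise. -/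
/-- `Int` of the binary string `k` with the bit at position `t` moved to the front. -/
def moveFrontInt (B : ℕ) (t : Fin B) (k : Fin B → Bool) : ℕ :=
  (if k t then 2 ^ (B - 1) else 0) +
    ∑ i : Fin B,
      if i.val < t.val then (if k i then 2 ^ (B - 2 - i.val) else 0)
      else if t.val < i.val then (if k i then 2 ^ (B - 1 - i.val) else 0)
      else 0

/-!
Removing bit `t` from `k` leaves a `(B-1)`-bit string of value `S < 2^(B-1)`, so
`w_t(k) = k_t 2^(B-1) + S`; for `t ≠ 0` the leading bit of that string is `k_0`, so
`S ≥ 2^(B-2)` iff `k_0 = 1`. Hence the gate `y_t` for output `r` fires iff `k_0 ∨ k_t`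
when `r = 0`, iff `k_t` when `r = t`, and always otherwise, and requiring all `B - 1`
gates to fire reproduces `z`. Finally `z_0 = k_0 ∨ ∀ t > 0, k_t` differs from `k_0` only
at `k = 01^(B-1)`.
-/

open Finset

/-- `binaryValue n b` is the paper's `Int`: `b 0` is the most significant bit. -/
def binaryValue (n : ℕ) (b : Fin n → Bool) : ℕ :=
  ∑ j : Fin n, if b j then 2 ^ (n - 1 - j.val) else 0

lemma binaryValue_succ (n : ℕ) (b : Fin (n + 1) → Bool) :
    binaryValue (n + 1) b = (if b 0 then 2 ^ n else 0) + binaryValue n (Fin.tail b) := by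
  simp only [binaryValue, Fin.sum_univ_succ, Fin.tail, Fin.val_zero, Fin.val_succ]
  congr 1
  refine sum_congr rfl fun j _ => ?_
  congr 2
  omega

lemma binaryValue_lt (n : ℕ) (b : Fin n → Bool) : binaryValue n b < 2 ^ n := by
  induction n with
  | zero => simp [binaryValue]
  | succ n ih =>
    have := ih (Fin.tail b)
    rw [binaryValue_succ, pow_succ]
    split_ifs <;> omega

lemma pow_le_binaryValue_iff (n : ℕ) (b : Fin (n + 1) → Bool) :
    2 ^ n ≤ binaryValue (n + 1) b ↔ b 0 = true := by
  have := binaryValue_lt n (Fin.tail b)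
  rw [binaryValue_succ]
  cases b 0 <;> simp; omega

lemma moveFrontInt_eq (n : ℕ) (t : Fin (n + 1)) (k : Fin (n + 1) → Bool) :
    moveFrontInt (n + 1) t k =
      (if k t then 2 ^ n else 0) + binaryValue n (k ∘ t.succAbove) := by
  rw [moveFrontInt, Fin.sum_univ_succAbove _ t, binaryValue]
  simp only [lt_irrefl, if_false, zero_add, Nat.add_sub_cancel]
  congr 1
  refine sum_congr rfl fun j _ => ?_
  rw [Function.comp_apply]
  rcases lt_or_ge j.castSucc t with hj | hj
  · rw [Fin.succAbove_of_castSucc_lt _ _ hj]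
    rw [Fin.lt_def, Fin.val_castSucc] at hj
    simp only [Fin.val_castSucc, if_pos hj]
    congr 2
  · rw [Fin.succAbove_of_le_castSucc _ _ hj]
    rw [Fin.le_def, Fin.val_castSucc] at hj
    simp only [Fin.val_succ, if_neg (show ¬j.val + 1 < t.val by omega),
      if_pos (show t.val < j.val + 1 by omega)]
    congr 2
    omega

lemma pow_le_moveFrontInt_iff (n : ℕ) (t : Fin (n + 1)) (k : Fin (n + 1) → Bool) :
    2 ^ n ≤ moveFrontInt (n + 1) t k ↔ k t = true := by
  have := binaryValue_lt n (k ∘ t.succAbove)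
  rw [moveFrontInt_eq]
  cases k t <;> simp; omega

lemma pow_le_moveFrontInt_iff_of_ne_zero (n : ℕ) {t : Fin (n + 2)} (ht : t ≠ 0)
    (k : Fin (n + 2) → Bool) :
    2 ^ n ≤ moveFrontInt (n + 2) t k ↔ k 0 = true ∨ k t = true := by
  have hhead := pow_le_binaryValue_iff n (k ∘ t.succAbove)
  rw [Function.comp_apply, Fin.succAbove_ne_zero_zero ht] at hhead
  have := Nat.pow_le_pow_right two_pos n.le_succ
  rw [moveFrontInt_eq]
  cases k t <;> simp [hhead]; omega

/-- The paper's gate `y_h` for output bit `r`, with `t = h + 1`. -/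
def thresholdGate (B : ℕ) (k : Fin B → Bool) (t r : Fin B) : Bool :=
  decide ((0 : ℤ) ≤ (moveFrontInt B t k : ℤ)
    - 2 ^ (B - 2) * (if r.val = 0 then 1 else 0)
    - 2 ^ (B - 1) * (if r = t then 1 else 0))

lemma thresholdGate_eq_decide_le (B : ℕ) (k : Fin B → Bool) (t r : Fin B) :
    thresholdGate B k t r = decide ((if r.val = 0 then 2 ^ (B - 2) else 0) +
      (if r = t then 2 ^ (B - 1) else 0) ≤ moveFrontInt B t k) := by
  rw [thresholdGate, decide_eq_decide, sub_sub, sub_nonneg, ← Nat.cast_le (α := ℤ)]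
  split_ifs <;> simp

section thresholdGate

variable {n : ℕ} (k : Fin (n + 2) → Bool) {t r : Fin (n + 2)}

lemma thresholdGate_zero (ht : t ≠ 0) : thresholdGate (n + 2) k t 0 = (k 0 || k t) := by
  simp [thresholdGate_eq_decide_le, ht.symm, pow_le_moveFrontInt_iff_of_ne_zero n ht]

lemma thresholdGate_self (ht : t ≠ 0) : thresholdGate (n + 2) k t t = k t := by
  simp [thresholdGate_eq_decide_le, Fin.val_eq_zero_iff, ht, pow_le_moveFrontInt_iff (n + 1)]

lemma thresholdGate_of_ne (hr : r ≠ 0) (htr : r ≠ t) : thresholdGate (n + 2) k t r = true := by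
  simp [thresholdGate_eq_decide_le, Fin.val_eq_zero_iff, hr, htr]

end thresholdGate

lemma card_le_sum_ite_iff {α : Type*} (s : Finset α) (p : α → Prop) [DecidablePred p] :
    s.card ≤ ∑ a ∈ s, (if p a then 1 else 0) ↔ ∀ a ∈ s, p a := by
  rw [← card_filter, ← card_filter_eq_iff]
  exact ⟨(card_filter_le s p).antisymm, Eq.ge⟩

section decode

variable {n : ℕ} (k : Fin (n + 2) → Bool)

def simpleDecode (r : Fin (n + 2)) : Bool :=
  if r.val = 0 then decide (∀ t : Fin (n + 2), 0 < t.val → k 0 = true ∨ k t = true) else k r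

def thresholdDecode (r : Fin (n + 2)) : Bool :=
  decide (n + 1 ≤ ∑ t ∈ univ.filter (fun t : Fin (n + 2) => 0 < t.val),
    if thresholdGate (n + 2) k t r then 1 else 0)

lemma simpleDecode_eq :
    simpleDecode k = if k = (fun i => decide (0 < i.val)) then fun _ => true else k := by
  funext r
  split_ifs with hk
  · simp [simpleDecode, hk, Fin.pos_iff_ne_zero]
  rcases eq_or_ne r 0 with rfl | hr
  · cases h0 : k 0
    · simp only [simpleDecode, Fin.val_zero, if_true, h0, decide_eq_false_iff_not]
      intro hall
      refine hk (funext fun i => ?_)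
      rcases eq_or_ne i 0 with rfl | hi
      · simp [h0]
      · simpa [Fin.pos_iff_ne_zero, hi, h0] using hall i
    · simp [simpleDecode, h0]
  · simp [simpleDecode, Fin.val_eq_zero_iff, hr]

lemma thresholdDecode_eq_simpleDecode : thresholdDecode k = simpleDecode k := by
  funext r
  have hcard : (univ.filter fun t : Fin (n + 2) => 0 < t.val).card = n + 1 := by
    simp [Fin.pos_iff_ne_zero, filter_ne', card_erase_of_mem]
  simp only [thresholdDecode, ← hcard, card_le_sum_ite_iff]
  simp only [mem_filter, mem_univ, true_and, Fin.val_pos_iff, Fin.pos_iff_ne_zero]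
  rcases eq_or_ne r 0 with rfl | hr
  · simp only [simpleDecode, Fin.val_zero, if_true, Fin.val_pos_iff, Fin.pos_iff_ne_zero]
    exact decide_eq_decide.mpr (forall_congr' fun t => imp_congr_right fun ht => by
      simp [thresholdGate_zero k ht])
  · simp only [simpleDecode, Fin.val_eq_zero_iff, if_neg hr]
    refine Bool.eq_iff_iff.mpr ⟨fun h => ?_, fun hkr => ?_⟩
    · simpa [thresholdGate_self k hr] using of_decide_eq_true h r hr
    · refine decide_eq_true fun t ht => ?_
      rcases eq_or_ne r t with rfl | htr
      · rwa [thresholdGate_self k ht]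
      · exact thresholdGate_of_ne k hr htr

end decode

/-- The block-decoding map of the approximate decoder: defining
`z₀(k) = [∀ h ≤ B-2, k₀ = 1 ∨ k_{h+1} = 1]` and `z_r(k) = k_r` for `r ≥ 1`,
or equivalently via the threshold gates
`y_h = [w_h(k) - 2^{B-2}·[r=0] - 2^{B-1}·[r=h+1] ≥ 0]` and `z = [Σ_h y_h ≥ B-1]`,
the resulting vector equals `(1,…,1)` when `k = (0,1,…,1)` and equals `k` otherwise. -/
theorem stmt_16 (B : ℕ) (hB : 2 ≤ B) (k : Fin B → Bool) :
    let bad : Fin B → Bool := fun i => decide (0 < i.val)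
    let zsimple : Fin B → Bool := fun r =>
      if r.val = 0 then decide (∀ t : Fin B, 0 < t.val → (k ⟨0, by omega⟩ = true ∨ k t = true))
      else k r
    let y : Fin B → Fin B → Bool := fun t r =>
      decide ((0 : ℤ) ≤ (moveFrontInt B t k : ℤ)
        - 2 ^ (B - 2) * (if r.val = 0 then 1 else 0)
        - 2 ^ (B - 1) * (if r = t then 1 else 0))
    let zthresh : Fin B → Bool := fun r =>
      decide (B - 1 ≤ ((Finset.univ.filter fun t : Fin B => 0 < t.val).sum
        fun t => if y t r then 1 else 0))
    zsimple = (if k = bad then (fun _ => true) else k) ∧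
    zthresh = (if k = bad then (fun _ => true) else k) := by
  obtain ⟨n, rfl⟩ : ∃ n, B = n + 2 := ⟨B - 2, by omega⟩
  exact ⟨simpleDecode_eq k, (thresholdDecode_eq_simpleDecode k).trans (simpleDecode_eq k)⟩
end
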